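/- Let L be a reduced 1-compact compactly generated multiplicative lattice, p a minimal prime element of L, and suppose Clique(Γᵐ(L)) < ∞. Then the set A = {x* : x ≰ p} has a greatest element. -/

import Mathlib

/-!
Annihilators `x*` with `x ≰ p` admit a maximal member `x*`: a strictly increasing chain
`a₀* < a₁* < ⋯` would give the pairwise orthogonal, nonzero (hence, the lattice being reduced,
pairwise distinct) elements `aᵢ₊₁* · aᵢ`, an infinite clique of `Γᵐ(L)`. This maximal member is
the greatest one: for `y ≰ p` also `x·y ≰ p` as `p` is prime, and `x* ≤ (x·y)*` forces
`x* = (x·y)* ≥ y*`.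
-/

variable {α : Type*}

/-- Iterated product `a^n` in a multiplicative lattice (with `a^0 = ⊤`). -/
def mpow [CompleteLattice α] (mul : α → α → α) (a : α) : ℕ → α
  | 0 => ⊤
  | n + 1 => mul a (mpow mul a n)

/-- `mul` makes the complete lattice `α` into a multiplicative lattice. -/
def IsMulLattice [CompleteLattice α] (mul : α → α → α) : Prop :=
  (∀ a b : α, mul a b = mul b a) ∧
  (∀ a b c : α, mul (mul a b) c = mul a (mul b c)) ∧
  (∀ (a : α) (s : Set α), mul a (sSup s) = ⨆ b ∈ s, mul a b) ∧
  (∀ a b : α, mul a b ≤ a ⊓ b) ∧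
  (∀ a : α, mul a ⊤ = a)

/-- The multiplicative lattice is reduced: the only nilpotent element is `⊥`. -/
def LatReduced [CompleteLattice α] (mul : α → α → α) : Prop :=
  ∀ (a : α) (n : ℕ), mpow mul a (n + 1) = ⊥ → a = ⊥

/-- `a* = sup {x | x·a = 0}`. -/
def starAnn [CompleteLattice α] (mul : α → α → α) (a : α) : α :=
  sSup {x : α | mul x a = ⊥}

/-- A prime element of a multiplicative lattice. -/
def IsPrimeElt [CompleteLattice α] (mul : α → α → α) (p : α) : Prop :=
  p ≠ ⊤ ∧ ∀ a b : α, mul a b ≤ p → a ≤ p ∨ b ≤ p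

/-- The zero-divisor graph `Γᵐ(L)` of a multiplicative lattice. -/
def zdg [CompleteLattice α] (mul : α → α → α) : SimpleGraph α where
  Adj a b := a ≠ b ∧ a ≠ ⊥ ∧ b ≠ ⊥ ∧ mul a b = ⊥ ∧ mul b a = ⊥
  symm := ⟨fun a b h => ⟨h.1.symm, h.2.2.1, h.2.1, h.2.2.2.2, h.2.2.2.1⟩⟩
  loopless := ⟨fun a h => h.1 rfl⟩

/-- `Clique(Γᵐ(L)) < ∞`. -/
def CliqueBounded [CompleteLattice α] (mul : α → α → α) : Prop :=
  ∃ N : ℕ, ∀ s : Finset α, (zdg mul).IsClique ↑s → s.card ≤ N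

namespace IsMulLattice

variable [CompleteLattice α] {mul : α → α → α}

theorem mul_comm (hL : IsMulLattice mul) (a b : α) : mul a b = mul b a := hL.1 a b

theorem mul_assoc (hL : IsMulLattice mul) (a b c : α) : mul (mul a b) c = mul a (mul b c) :=
  hL.2.1 a b c

theorem mul_le_left (hL : IsMulLattice mul) (a b : α) : mul a b ≤ a :=
  (hL.2.2.2.1 a b).trans inf_le_left

theorem mul_le_right (hL : IsMulLattice mul) (a b : α) : mul a b ≤ b :=
  (hL.2.2.2.1 a b).trans inf_le_right

theorem mul_top (hL : IsMulLattice mul) (a : α) : mul a ⊤ = a := hL.2.2.2.2 a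

theorem bot_mul (hL : IsMulLattice mul) (a : α) : mul ⊥ a = ⊥ :=
  le_bot_iff.1 (hL.mul_le_left ⊥ a)

theorem mul_le_mul_left (hL : IsMulLattice mul) (a : α) {b c : α} (h : b ≤ c) :
    mul a b ≤ mul a c := by
  have hsup := hL.2.2.1 a {b, c}
  rw [sSup_pair, sup_eq_right.2 h] at hsup
  rw [hsup]
  exact le_biSup (mul a) (Set.mem_insert b {c})

theorem mul_le_mul (hL : IsMulLattice mul) {a b c d : α} (hac : a ≤ c) (hbd : b ≤ d) :
    mul a b ≤ mul c d :=
  calc mul a b ≤ mul a d := hL.mul_le_mul_left a hbd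
    _ = mul d a := hL.mul_comm a d
    _ ≤ mul d c := hL.mul_le_mul_left d hac
    _ = mul c d := hL.mul_comm d c

end IsMulLattice

section StarAnn

variable [CompleteLattice α] {mul : α → α → α}

theorem le_starAnn {a x : α} (h : mul x a = ⊥) : x ≤ starAnn mul a := le_sSup h

theorem starAnn_mul_self (hL : IsMulLattice mul) (a : α) : mul (starAnn mul a) a = ⊥ := by
  rw [hL.mul_comm, starAnn, hL.2.2.1]
  exact le_bot_iff.1 (iSup₂_le fun b hb => (hL.mul_comm a b).trans_le hb.le)

theorem starAnn_le_starAnn_mul_right (hL : IsMulLattice mul) (a b : α) :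
    starAnn mul a ≤ starAnn mul (mul a b) :=
  le_starAnn <| by rw [← hL.mul_assoc, starAnn_mul_self hL, hL.bot_mul]

theorem starAnn_le_starAnn_mul_left (hL : IsMulLattice mul) (a b : α) :
    starAnn mul b ≤ starAnn mul (mul a b) :=
  hL.mul_comm b a ▸ starAnn_le_starAnn_mul_right hL b a

end StarAnn

section Chains

variable [CompleteLattice α] {mul : α → α → α}

theorem LatReduced.eq_bot_of_mul_self (hred : LatReduced mul) (hL : IsMulLattice mul) {a : α}
    (h : mul a a = ⊥) : a = ⊥ :=
  hred a 1 <| by simp only [mpow, hL.mul_top, h]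

theorem CliqueBounded.false_of_pairwise_mul_eq_bot (hclique : CliqueBounded mul) {c : ℕ → α}
    (hinj : Function.Injective c) (hne : ∀ i, c i ≠ ⊥)
    (horth : Pairwise fun i j => mul (c i) (c j) = ⊥) : False := by
  classical
  obtain ⟨N, hN⟩ := hclique
  have hclq : (zdg mul).IsClique ↑((Finset.range (N + 1)).map ⟨c, hinj⟩) := by
    simp only [Finset.coe_map]
    rintro _ ⟨i, -, rfl⟩ _ ⟨j, -, rfl⟩ hij
    have hij' : i ≠ j := fun h => hij (congrArg c h)
    exact ⟨hij, hne i, hne j, horth hij', horth hij'.symm⟩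
  simpa using hN _ hclq

theorem wellFounded_starAnn_gt (hL : IsMulLattice mul) (hred : LatReduced mul)
    (hclique : CliqueBounded mul) :
    WellFounded fun y x : α => starAnn mul x < starAnn mul y := by
  refine wellFounded_iff_isEmpty_descending_chain.2 ⟨fun ⟨a, ha⟩ => ?_⟩
  have hmono : StrictMono (starAnn mul ∘ a) := strictMono_nat_of_lt_succ ha
  set c : ℕ → α := fun i => mul (starAnn mul (a (i + 1))) (a i)
  have hne : ∀ i, c i ≠ ⊥ := fun i hc => (ha i).not_ge (le_starAnn hc)
  have hlt : ∀ {i j}, i < j → mul (c i) (c j) = ⊥ := fun {i j} hij =>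
    le_bot_iff.1 <| calc
      mul (c i) (c j) ≤ mul (starAnn mul (a j)) (a j) :=
        hL.mul_le_mul ((hL.mul_le_left _ _).trans (hmono.monotone hij)) (hL.mul_le_right _ _)
      _ = ⊥ := starAnn_mul_self hL (a j)
  have horth : Pairwise fun i j => mul (c i) (c j) = ⊥ := fun i j hij =>
    hij.lt_or_gt.elim hlt fun hji => (hL.mul_comm _ _).trans (hlt hji)
  refine hclique.false_of_pairwise_mul_eq_bot (fun i j hij => ?_) hne horth
  by_contra hij'
  have hsq : mul (c i) (c j) = ⊥ := horth hij'
  rw [← hij] at hsq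
  exact hne i (hred.eq_bot_of_mul_self hL hsq)

end Chains

theorem IsPrimeElt.not_top_le [CompleteLattice α] {mul : α → α → α} {p : α}
    (hp : IsPrimeElt mul p) : ¬ ⊤ ≤ p :=
  fun h => hp.1 (top_le_iff.1 h)

theorem IsPrimeElt.mul_not_le [CompleteLattice α] {mul : α → α → α} {p a b : α}
    (hp : IsPrimeElt mul p) (ha : ¬ a ≤ p) (hb : ¬ b ≤ p) : ¬ mul a b ≤ p :=
  fun h => (hp.2 a b h).elim ha hb

theorem greatest_annihilator_outside_minimal_prime_general [CompleteLattice α]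
    (mul : α → α → α) (hL : IsMulLattice mul)
    (hred : LatReduced mul)
    (hclique : CliqueBounded mul) (p : α) (hp : IsPrimeElt mul p) :
    ∃ g : α, (∃ x : α, ¬ x ≤ p ∧ g = starAnn mul x) ∧
      ∀ a : α, (∃ x : α, ¬ x ≤ p ∧ a = starAnn mul x) → a ≤ g := by
  obtain ⟨x, hx, hmax⟩ :=
    (wellFounded_starAnn_gt hL hred hclique).has_min {x | ¬ x ≤ p} ⟨⊤, hp.not_top_le⟩
  refine ⟨starAnn mul x, ⟨x, hx, rfl⟩, ?_⟩
  rintro _ ⟨y, hy, rfl⟩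
  have hxy : starAnn mul (mul x y) = starAnn mul x :=
    ((starAnn_le_starAnn_mul_right hL x y).eq_of_not_lt (hmax _ (hp.mul_not_le hx hy))).symm
  exact hxy ▸ starAnn_le_starAnn_mul_left hL x y

theorem greatest_annihilator_outside_minimal_prime [CompleteLattice α]
    [IsCompactlyGenerated α] (mul : α → α → α) (hL : IsMulLattice mul)
    (hred : LatReduced mul) (htop : IsCompactElement (⊤ : α))
    (hclique : CliqueBounded mul) (p : α) (hp : IsPrimeElt mul p)
    (hpmin : ∀ q : α, IsPrimeElt mul q → q ≤ p → q = p) :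
    ∃ g : α, (∃ x : α, ¬ x ≤ p ∧ g = starAnn mul x) ∧
      ∀ a : α, (∃ x : α, ¬ x ≤ p ∧ a = starAnn mul x) → a ≤ g :=
  greatest_annihilator_outside_minimal_prime_general mul hL hred hclique p hp
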